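/- Let z_1,…,z_n ∈ ℝ^d with ‖z_j‖₂ > 0 for all j and ‖z_i‖₂ ≥ 1/2 for a fixed index i, let z̄_j = z_j/‖z_j‖₂, let γ > 0, and let a_1,…,a_n ∈ ℝ. Suppose w₁, w₂ ∈ W_i have the same orthogonal component, i.e., w₁ − ⟨w₁, z̄_i⟩ z̄_i = w₂ − ⟨w₂, z̄_i⟩ z̄_i, with ⟨w₁, z̄_i⟩ ≥ 0 and ⟨w₂, z̄_i⟩ < 0. Then h(w₁) − h(w₂) = a_i z_i, and hence ‖h(w₁) − h(w₂)‖₂ ≥ |a_i|/2. -/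

import Mathlib

open RealInnerProductSpace

/-- The set `W_i = {w : |⟨w, z̄_i⟩| ≤ γ, and |⟨w − ⟨w, z̄_i⟩ z̄_i, z̄_j⟩| ≥ 2γ for all j ≠ i}`. -/
def sepSet {d n : ℕ} (zbar : Fin n → EuclideanSpace ℝ (Fin d)) (γ : ℝ) (i : Fin n) :
    Set (EuclideanSpace ℝ (Fin d)) :=
  {w | |⟪w, zbar i⟫| ≤ γ ∧ ∀ j, j ≠ i → 2 * γ ≤ |⟪w - ⟪w, zbar i⟫ • zbar i, zbar j⟫|}

/-- `h(w) = Σ_j a_j · 1{⟨w, z_j⟩ ≥ 0} · z_j`, the ReLU-gradient sum. -/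
noncomputable def reluSum {d n : ℕ} (a : Fin n → ℝ) (z : Fin n → EuclideanSpace ℝ (Fin d))
    (w : EuclideanSpace ℝ (Fin d)) : EuclideanSpace ℝ (Fin d) :=
  ∑ j, (a j * if 0 ≤ ⟪w, z j⟫ then 1 else 0) • z j

/-!
For `j ≠ i`, write `w = w⊥ + ⟨w, z̄_i⟩ z̄_i`. Then `⟨w, z̄_j⟩ = ⟨w⊥, z̄_j⟩ + ⟨w, z̄_i⟩⟨z̄_i, z̄_j⟩`,
where the first term has modulus at least `2γ` and the perturbation at most `γ`; so the sign of
`⟨w, z_j⟩` is that of `⟨w⊥, z̄_j⟩`, which `w₁` and `w₂` share. Only the `i`-th indicator differs,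
and `h(w₁) − h(w₂) = a_i z_i`.
-/

theorem nonneg_add_iff_of_abs_le {s e γ : ℝ} (he : |e| ≤ γ) (hs : 2 * γ ≤ |s|) :
    0 ≤ s + e ↔ 0 ≤ s := by
  have he' := abs_le.mp he
  have hγ : 0 ≤ γ := (abs_nonneg e).trans he
  rcases abs_cases s with ⟨hs', _⟩ | ⟨hs', _⟩ <;> rw [hs'] at hs <;> constructor <;> intro <;>
    linarith

section InnerProductSpace

variable {E : Type*} [NormedAddCommGroup E] [InnerProductSpace ℝ E]

theorem inner_nonneg_iff_inner_sub_proj_nonneg {u v w : E} {γ : ℝ} (hu : ‖u‖ ≤ 1)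
    (hv : ‖v‖ ≤ 1) (hwu : |⟪w, u⟫| ≤ γ) (hsep : 2 * γ ≤ |⟪w - ⟪w, u⟫ • u, v⟫|) :
    0 ≤ ⟪w, v⟫ ↔ 0 ≤ ⟪w - ⟪w, u⟫ • u, v⟫ := by
  have hsplit : ⟪w, v⟫ = ⟪w - ⟪w, u⟫ • u, v⟫ + ⟪w, u⟫ * ⟪u, v⟫ := by
    rw [inner_sub_left, real_inner_smul_left]; ring
  have huv : |⟪u, v⟫| ≤ 1 :=
    (abs_real_inner_le_norm u v).trans (mul_le_one₀ hu (norm_nonneg v) hv)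
  have hperturb : |⟪w, u⟫ * ⟪u, v⟫| ≤ γ := by
    rw [abs_mul]
    exact (mul_le_of_le_one_right (abs_nonneg _) huv).trans hwu
  rw [hsplit]
  exact nonneg_add_iff_of_abs_le hperturb hsep

theorem inner_inv_norm_smul_nonneg_iff {w z : E} (hz : 0 < ‖z‖) :
    0 ≤ ⟪w, ‖z‖⁻¹ • z⟫ ↔ 0 ≤ ⟪w, z⟫ := by
  rw [real_inner_smul_right, mul_nonneg_iff_of_pos_left (inv_pos.mpr hz)]

end InnerProductSpace

theorem reluSum_sub_reluSum_eq_smul {d n : ℕ} (a : Fin n → ℝ)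
    (z : Fin n → EuclideanSpace ℝ (Fin d)) {i : Fin n} {w₁ w₂ : EuclideanSpace ℝ (Fin d)}
    (hsame : ∀ j, j ≠ i → (0 ≤ ⟪w₁, z j⟫ ↔ 0 ≤ ⟪w₂, z j⟫))
    (hpos : 0 ≤ ⟪w₁, z i⟫) (hneg : ⟪w₂, z i⟫ < 0) :
    reluSum a z w₁ - reluSum a z w₂ = a i • z i := by
  have hterm : ∀ j, (a j * if 0 ≤ ⟪w₁, z j⟫ then 1 else 0) • z j
      - (a j * if 0 ≤ ⟪w₂, z j⟫ then 1 else 0) • z j = if j = i then a i • z i else 0 := by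
    intro j
    by_cases hj : j = i
    · subst hj
      simp [hpos, not_le.mpr hneg]
    · rw [if_neg hj, if_congr (hsame j hj) rfl rfl, sub_self]
  simp only [reluSum, ← Finset.sum_sub_distrib, hterm, Finset.sum_ite_eq', Finset.mem_univ,
    if_true]

theorem reluSum_sub_eq_general {d n : ℕ} (z : Fin n → EuclideanSpace ℝ (Fin d))
    (hz : ∀ j, 0 < ‖z j‖) (i : Fin n) (hzi : 1 / 2 ≤ ‖z i‖)
    (zbar : Fin n → EuclideanSpace ℝ (Fin d)) (hzbar : ∀ j, zbar j = ‖z j‖⁻¹ • z j)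
    (γ : ℝ) (a : Fin n → ℝ)
    (w₁ w₂ : EuclideanSpace ℝ (Fin d))
    (hw₁ : w₁ ∈ sepSet zbar γ i) (hw₂ : w₂ ∈ sepSet zbar γ i)
    (horth : w₁ - ⟪w₁, zbar i⟫ • zbar i = w₂ - ⟪w₂, zbar i⟫ • zbar i)
    (hpos : 0 ≤ ⟪w₁, zbar i⟫) (hneg : ⟪w₂, zbar i⟫ < 0) :
    reluSum a z w₁ - reluSum a z w₂ = a i • z i ∧
      |a i| / 2 ≤ ‖reluSum a z w₁ - reluSum a z w₂‖ := by
  have hunit : ∀ j, ‖zbar j‖ ≤ 1 := fun j => by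
    rw [hzbar j, norm_smul, norm_inv, norm_norm, inv_mul_cancel₀ (hz j).ne']
  have hsign : ∀ w j, 0 ≤ ⟪w, zbar j⟫ ↔ 0 ≤ ⟪w, z j⟫ := fun w j => by
    rw [hzbar j]
    exact inner_inv_norm_smul_nonneg_iff (hz j)
  have hsame : ∀ j, j ≠ i → (0 ≤ ⟪w₁, z j⟫ ↔ 0 ≤ ⟪w₂, z j⟫) := fun j hj => by
    rw [← hsign, ← hsign,
      inner_nonneg_iff_inner_sub_proj_nonneg (hunit i) (hunit j) hw₁.1 (hw₁.2 j hj),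
      inner_nonneg_iff_inner_sub_proj_nonneg (hunit i) (hunit j) hw₂.1 (hw₂.2 j hj), horth]
  have hdiff : reluSum a z w₁ - reluSum a z w₂ = a i • z i :=
    reluSum_sub_reluSum_eq_smul a z hsame ((hsign w₁ i).mp hpos)
      (not_le.mp ((hsign w₂ i).not.mp hneg.not_ge))
  refine ⟨hdiff, ?_⟩
  rw [hdiff, norm_smul, Real.norm_eq_abs]
  nlinarith [abs_nonneg (a i)]

/-- If `w₁, w₂ ∈ W_i` have the same orthogonal component with `⟨w₁, z̄_i⟩ ≥ 0` and
`⟨w₂, z̄_i⟩ < 0`, then `h(w₁) − h(w₂) = a_i z_i`, hence `‖h(w₁) − h(w₂)‖ ≥ |a_i|/2`. -/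
theorem reluSum_sub_eq {d n : ℕ} (z : Fin n → EuclideanSpace ℝ (Fin d))
    (hz : ∀ j, 0 < ‖z j‖) (i : Fin n) (hzi : 1 / 2 ≤ ‖z i‖)
    (zbar : Fin n → EuclideanSpace ℝ (Fin d)) (hzbar : ∀ j, zbar j = ‖z j‖⁻¹ • z j)
    (γ : ℝ) (hγ : 0 < γ) (a : Fin n → ℝ)
    (w₁ w₂ : EuclideanSpace ℝ (Fin d))
    (hw₁ : w₁ ∈ sepSet zbar γ i) (hw₂ : w₂ ∈ sepSet zbar γ i)
    (horth : w₁ - ⟪w₁, zbar i⟫ • zbar i = w₂ - ⟪w₂, zbar i⟫ • zbar i)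
    (hpos : 0 ≤ ⟪w₁, zbar i⟫) (hneg : ⟪w₂, zbar i⟫ < 0) :
    reluSum a z w₁ - reluSum a z w₂ = a i • z i ∧
      |a i| / 2 ≤ ‖reluSum a z w₁ - reluSum a z w₂‖ :=
  reluSum_sub_eq_general z hz i hzi zbar hzbar γ a w₁ w₂ hw₁ hw₂ horth hpos hneg
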